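/- Let L ≥ 1 and N = 2^L. Then the DFT matrix admits the butterfly factorization F_N = F^(L) F^(L−1) ⋯ F^(1) R_N, where F^(ℓ) := I_{2^{L−ℓ}} ⊗ B_{2^ℓ} are the butterfly factors and R_N is the bit-reversal permutation matrix. -/

import Mathlib

/-- The DFT matrix of size `N`: entry `ω_N^{(k−1)(l−1)}` with `ω_N = exp(−2πi/N)`,
at 1-based row `k` and column `l` (0-based indices here). -/
noncomputable def dftM (N : ℕ) : Matrix (Fin N) (Fin N) ℂ :=
  Matrix.of fun k l =>
    Complex.exp (-(2 * (Real.pi : ℂ) * Complex.I) / N) ^ ((k : ℕ) * (l : ℕ))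

/-- The butterfly block `B_n := [[I_{n/2}, A_{n/2}], [I_{n/2}, −A_{n/2}]]`, where
`A_{n/2} = diag(1, ω_n, …, ω_n^{n/2−1})` and `ω_n = exp(−2πi/n)`. -/
noncomputable def Bmat (n : ℕ) : Matrix (Fin n) (Fin n) ℂ :=
  Matrix.of fun k l =>
    if (k : ℕ) < n / 2 then
      if (l : ℕ) = (k : ℕ) then 1
      else if (l : ℕ) = (k : ℕ) + n / 2 then
        Complex.exp (-(2 * (Real.pi : ℂ) * Complex.I) / n) ^ (k : ℕ)
      else 0
    else
      if (l : ℕ) = (k : ℕ) - n / 2 then 1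
      else if (l : ℕ) = (k : ℕ) then
        -Complex.exp (-(2 * (Real.pi : ℂ) * Complex.I) / n) ^ ((k : ℕ) - n / 2)
      else 0

/-- The permutation matrix `P_n` with `(P_n)_{j, 2j−1} = 1` and `(P_n)_{n/2+j, 2j} = 1`
for `1 ≤ j ≤ n/2` (1-based), i.e. `P_n x = (x_1, x_3, …, x_{n−1}, x_2, x_4, …, x_n)`. -/
noncomputable def Pmat (n : ℕ) : Matrix (Fin n) (Fin n) ℂ :=
  Matrix.of fun r c =>
    if (r : ℕ) < n / 2 then (if (c : ℕ) = 2 * (r : ℕ) then 1 else 0)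
    else (if (c : ℕ) = 2 * ((r : ℕ) - n / 2) + 1 then 1 else 0)

/-- The Kronecker product `I_{2^{L−ℓ}} ⊗ M` for `M` of size `2^ℓ × 2^ℓ`, as a
`2^L × 2^L` block-diagonal matrix. -/
noncomputable def blockDiag (L ℓ : ℕ) (M : Matrix (Fin (2 ^ ℓ)) (Fin (2 ^ ℓ)) ℂ) :
    Matrix (Fin (2 ^ L)) (Fin (2 ^ L)) ℂ :=
  Matrix.of fun i j =>
    if (i : ℕ) / 2 ^ ℓ = (j : ℕ) / 2 ^ ℓ then
      M ⟨(i : ℕ) % 2 ^ ℓ, Nat.mod_lt _ (Nat.two_pow_pos ℓ)⟩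
        ⟨(j : ℕ) % 2 ^ ℓ, Nat.mod_lt _ (Nat.two_pow_pos ℓ)⟩
    else 0

/-- The butterfly factor `F^(ℓ) := I_{2^{L−ℓ}} ⊗ B_{2^ℓ}`. -/
noncomputable def Fbut (L ℓ : ℕ) : Matrix (Fin (2 ^ L)) (Fin (2 ^ L)) ℂ :=
  blockDiag L ℓ (Bmat (2 ^ ℓ))

/-- `Q_ℓ := I_{N/2^ℓ} ⊗ P_{2^ℓ}`. -/
noncomputable def Qmat (L ℓ : ℕ) : Matrix (Fin (2 ^ L)) (Fin (2 ^ L)) ℂ :=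
  blockDiag L ℓ (Pmat (2 ^ ℓ))

/-- The bit-reversal permutation matrix `R_N := Q_1 Q_2 ⋯ Q_L`. -/
noncomputable def Rmat (L : ℕ) : Matrix (Fin (2 ^ L)) (Fin (2 ^ L)) ℂ :=
  ((List.range' 1 L).map (Qmat L)).prod

lemma pow_split {ℓ L : ℕ} (h : ℓ ≤ L) : 2 ^ (L - ℓ) * 2 ^ ℓ = 2 ^ L := by
  rw [← pow_add]; congr 1; omega

def splitEquiv (L ℓ : ℕ) (h : ℓ ≤ L) : Fin (2 ^ (L - ℓ)) × Fin (2 ^ ℓ) ≃ Fin (2 ^ L) where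
  toFun p := ⟨(p.1 : ℕ) * 2 ^ ℓ + (p.2 : ℕ), by
    have h1 : (p.1 : ℕ) + 1 ≤ 2 ^ (L - ℓ) := p.1.isLt
    have h2 : (p.2 : ℕ) < 2 ^ ℓ := p.2.isLt
    have h3 : ((p.1 : ℕ) + 1) * 2 ^ ℓ ≤ 2 ^ (L - ℓ) * 2 ^ ℓ := Nat.mul_le_mul_right _ h1
    rw [pow_split h] at h3
    nlinarith⟩
  invFun i := (⟨(i : ℕ) / 2 ^ ℓ, by
      have := i.isLt
      rw [Nat.div_lt_iff_lt_mul (Nat.two_pow_pos ℓ)]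
      rw [pow_split h]; exact this⟩,
    ⟨(i : ℕ) % 2 ^ ℓ, Nat.mod_lt _ (Nat.two_pow_pos ℓ)⟩)
  left_inv p := by
    ext
    · show ((p.1 : ℕ) * 2 ^ ℓ + (p.2 : ℕ)) / 2 ^ ℓ = (p.1 : ℕ)
      rw [mul_comm, Nat.mul_add_div (Nat.two_pow_pos ℓ), Nat.div_eq_of_lt p.2.isLt]
      omega
    · show ((p.1 : ℕ) * 2 ^ ℓ + (p.2 : ℕ)) % 2 ^ ℓ = (p.2 : ℕ)
      rw [mul_comm, Nat.mul_add_mod, Nat.mod_eq_of_lt p.2.isLt]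
  right_inv i := by
    ext
    exact Nat.div_add_mod' _ _

lemma splitEquiv_val (L ℓ : ℕ) (h : ℓ ≤ L) (p : Fin (2 ^ (L - ℓ)) × Fin (2 ^ ℓ)) :
    ((splitEquiv L ℓ h p : Fin (2 ^ L)) : ℕ) = (p.1 : ℕ) * 2 ^ ℓ + (p.2 : ℕ) := rfl

lemma nat_div_mod_inj {a b d : ℕ} (h1 : a / d = b / d) (h2 : a % d = b % d) :
    a = b := by
  have ha := Nat.div_add_mod a d
  have hb := Nat.div_add_mod b d
  rw [h1, h2] at ha
  omega

lemma blockDiag_apply (L ℓ : ℕ) (M : Matrix (Fin (2 ^ ℓ)) (Fin (2 ^ ℓ)) ℂ) (i j : Fin (2 ^ L)) :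
    blockDiag L ℓ M i j =
      if (i : ℕ) / 2 ^ ℓ = (j : ℕ) / 2 ^ ℓ then
        M ⟨(i : ℕ) % 2 ^ ℓ, Nat.mod_lt _ (Nat.two_pow_pos ℓ)⟩
          ⟨(j : ℕ) % 2 ^ ℓ, Nat.mod_lt _ (Nat.two_pow_pos ℓ)⟩
      else 0 := rfl

lemma blockDiag_self (L : ℕ) (M : Matrix (Fin (2 ^ L)) (Fin (2 ^ L)) ℂ) :
    blockDiag L L M = M := by
  ext i j
  rw [blockDiag_apply, if_pos (by rw [Nat.div_eq_of_lt i.isLt, Nat.div_eq_of_lt j.isLt])]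
  congr 1 <;> exact Fin.ext (Nat.mod_eq_of_lt (Fin.isLt _))

lemma blockDiag_one (L ℓ : ℕ) : blockDiag L ℓ (1 : Matrix (Fin (2 ^ ℓ)) (Fin (2 ^ ℓ)) ℂ) = 1 := by
  ext i j
  rw [blockDiag_apply]
  by_cases hij : i = j
  · subst hij
    rw [if_pos rfl, Matrix.one_apply_eq, Matrix.one_apply_eq]
  · rw [Matrix.one_apply_ne hij]
    split_ifs with h1
    · rw [Matrix.one_apply_ne]
      intro hc
      exact hij (Fin.ext (nat_div_mod_inj h1 (congrArg Fin.val hc)))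
    · rfl

lemma blockDiag_mul (L ℓ : ℕ) (h : ℓ ≤ L) (A B : Matrix (Fin (2 ^ ℓ)) (Fin (2 ^ ℓ)) ℂ) :
    blockDiag L ℓ (A * B) = blockDiag L ℓ A * blockDiag L ℓ B := by
  ext i j
  rw [Matrix.mul_apply, ← Equiv.sum_comp (splitEquiv L ℓ h), Fintype.sum_prod_type]
  have hdiv : ∀ (a : Fin (2 ^ (L - ℓ))) (b : Fin (2 ^ ℓ)),
      ((a : ℕ) * 2 ^ ℓ + (b : ℕ)) / 2 ^ ℓ = (a : ℕ) := fun a b => by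
    rw [mul_comm, Nat.mul_add_div (Nat.two_pow_pos ℓ), Nat.div_eq_of_lt b.isLt]
    omega
  have hmod : ∀ (a : Fin (2 ^ (L - ℓ))) (b : Fin (2 ^ ℓ)),
      ((a : ℕ) * 2 ^ ℓ + (b : ℕ)) % 2 ^ ℓ = (b : ℕ) := fun a b => by
    rw [mul_comm, Nat.mul_add_mod, Nat.mod_eq_of_lt b.isLt]
  simp only [blockDiag_apply, splitEquiv_val, hdiv, hmod, Fin.eta]
  have hiq : (i : ℕ) / 2 ^ ℓ < 2 ^ (L - ℓ) := by
    rw [Nat.div_lt_iff_lt_mul (Nat.two_pow_pos ℓ), pow_split h]; exact i.isLt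
  rw [Finset.sum_eq_single (⟨(i : ℕ) / 2 ^ ℓ, hiq⟩ : Fin (2 ^ (L - ℓ)))]
  · by_cases hij : (i : ℕ) / 2 ^ ℓ = (j : ℕ) / 2 ^ ℓ
    · simp [hij, Matrix.mul_apply]
    · simp [hij]
  · intro a _ ha
    apply Finset.sum_eq_zero
    intro b _
    rw [if_neg, zero_mul]
    intro hc
    exact ha (Fin.ext hc.symm)
  · intro hmem
    exact absurd (Finset.mem_univ _) hmem

lemma blockDiag_blockDiag (L K ℓ : ℕ) (hℓK : ℓ ≤ K) (hKL : K ≤ L)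
    (M : Matrix (Fin (2 ^ ℓ)) (Fin (2 ^ ℓ)) ℂ) :
    blockDiag L K (blockDiag K ℓ M) = blockDiag L ℓ M := by
  ext i j
  obtain ⟨d, hd⟩ : (2 : ℕ) ^ ℓ ∣ 2 ^ K := pow_dvd_pow 2 hℓK
  have hd0 : 0 < d := Nat.pos_of_ne_zero (by rintro rfl; simp at hd)
  simp only [blockDiag_apply]
  have e1 : ∀ a : ℕ, a % 2 ^ K % 2 ^ ℓ = a % 2 ^ ℓ := fun a => Nat.mod_mod_of_dvd a ⟨d, hd⟩
  have e2 : ∀ a : ℕ, a % 2 ^ K / 2 ^ ℓ = a / 2 ^ ℓ % d := fun a => by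
    rw [hd, Nat.mod_mul_right_div_self]
  have e3 : ∀ a : ℕ, a / 2 ^ K = a / 2 ^ ℓ / d := fun a => by
    rw [hd, Nat.div_div_eq_div_mul]
  by_cases h1 : (i : ℕ) / 2 ^ ℓ = (j : ℕ) / 2 ^ ℓ
  · rw [if_pos h1, if_pos (by rw [e3, e3, h1]), if_pos (by rw [e2, e2, h1])]
    congr 1 <;> exact Fin.ext (e1 _)
  · rw [if_neg h1]
    by_cases h2 : (i : ℕ) / 2 ^ K = (j : ℕ) / 2 ^ K
    · rw [if_pos h2, if_neg]
      intro hc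
      rw [e2, e2] at hc
      rw [e3, e3] at h2
      exact h1 (nat_div_mod_inj h2 hc)
    · rw [if_neg h2]

lemma blockDiag_prod (L ℓ : ℕ) (h : ℓ ≤ L) (ms : List (Matrix (Fin (2 ^ ℓ)) (Fin (2 ^ ℓ)) ℂ)) :
    (ms.map (blockDiag L ℓ)).prod = blockDiag L ℓ ms.prod := by
  induction ms with
  | nil => simp [blockDiag_one]
  | cons a t ih => simp [blockDiag_mul L ℓ h, ih]

lemma dft_rec (K : ℕ) :
    dftM (2 ^ (K + 1)) =
      Bmat (2 ^ (K + 1)) * blockDiag (K + 1) K (dftM (2 ^ K)) * Pmat (2 ^ (K + 1)) := by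
  have hn : 0 < 2 ^ K := Nat.two_pow_pos K
  have hN : (2 : ℕ) ^ (K + 1) = 2 * 2 ^ K := by rw [pow_succ]; ring
  have hhalf : (2 : ℕ) ^ (K + 1) / 2 = 2 ^ K := by omega
  set ω : ℂ := Complex.exp (-(2 * (Real.pi : ℂ) * Complex.I) / ((2 ^ (K + 1) : ℕ) : ℂ))
    with hωdef
  have hcast : ((2 ^ (K + 1) : ℕ) : ℂ) = 2 * ((2 ^ K : ℕ) : ℂ) := by
    rw [hN]; push_cast; ring
  have hne : ((2 ^ K : ℕ) : ℂ) ≠ 0 := Nat.cast_ne_zero.mpr hn.ne'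
  have hω2 : Complex.exp (-(2 * (Real.pi : ℂ) * Complex.I) / ((2 ^ K : ℕ) : ℂ)) = ω ^ 2 := by
    rw [hωdef, ← Complex.exp_nat_mul]
    congr 1
    rw [hcast]
    field_simp
    ring
  have hωn : ω ^ (2 ^ K : ℕ) = -1 := by
    rw [hωdef, ← Complex.exp_nat_mul]
    have : ((2 ^ K : ℕ) : ℂ) * (-(2 * (Real.pi : ℂ) * Complex.I) / ((2 ^ (K + 1) : ℕ) : ℂ))
        = -((Real.pi : ℂ) * Complex.I) := by
      rw [hcast]; field_simp
    rw [this, Complex.exp_neg, Complex.exp_pi_mul_I]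
    norm_num
  have hωN : ω ^ (2 * 2 ^ K : ℕ) = 1 := by
    rw [mul_comm, pow_mul, hωn]; norm_num
  ext k l
  rw [Matrix.mul_apply]
  have hkK := k.isLt
  have hlK := l.isLt
  obtain ⟨t, ht | ht⟩ : ∃ t, (l : ℕ) = 2 * t ∨ (l : ℕ) = 2 * t + 1 := ⟨(l : ℕ) / 2, by omega⟩
  · -- l even
    have htK : t < 2 ^ K := by omega
    rw [Finset.sum_eq_single (⟨t, by omega⟩ : Fin (2 ^ (K + 1)))]
    rotate_left
    · intro m _ hm
      have hmv : (m : ℕ) ≠ t := fun hc => hm (Fin.ext hc)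
      have hmK := m.isLt
      have : Pmat (2 ^ (K + 1)) m l = 0 := by
        simp only [Pmat, Matrix.of_apply, hhalf]
        split_ifs with h1 h2 <;> first | rfl | (exfalso; omega)
      rw [this, mul_zero]
    · intro hmem; exact absurd (Finset.mem_univ _) hmem
    have hP : Pmat (2 ^ (K + 1)) (⟨t, by omega⟩ : Fin (2 ^ (K + 1))) l = 1 := by
      simp only [Pmat, Matrix.of_apply, hhalf]
      rw [if_pos (show t < 2 ^ K from htK), if_pos ht]
    rw [hP, mul_one, Matrix.mul_apply]
    by_cases hk : (k : ℕ) < 2 ^ K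
    · -- k in top half
      have hB : ∀ i : Fin (2 ^ (K + 1)), Bmat (2 ^ (K + 1)) k i =
          (if i = k then 1 else 0)
            + (if i = (⟨(k : ℕ) + 2 ^ K, by omega⟩ : Fin (2 ^ (K + 1))) then ω ^ (k : ℕ)
              else 0) := by
        intro i
        simp only [Bmat, Matrix.of_apply, hhalf, ← hωdef]
        rw [if_pos hk]
        rcases eq_or_ne (i : ℕ) (k : ℕ) with h1 | h1
        · rw [if_pos h1, if_pos (Fin.ext h1), if_neg (fun hc => by
            have := congrArg Fin.val hc; simp at this; omega), add_zero]
        · rw [if_neg h1, if_neg (fun hc => h1 (congrArg Fin.val hc)), zero_add]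
          rcases eq_or_ne (i : ℕ) ((k : ℕ) + 2 ^ K) with h2 | h2
          · rw [if_pos h2, if_pos (Fin.ext h2)]
          · rw [if_neg h2, if_neg (fun hc => h2 (congrArg Fin.val hc))]
      simp only [hB, add_mul, ite_mul, one_mul, zero_mul, Finset.sum_add_distrib,
        Finset.sum_ite_eq', Finset.mem_univ, if_true]
      simp only [blockDiag_apply]
      rw [if_pos (by rw [Nat.div_eq_of_lt hk, Nat.div_eq_of_lt htK]),
        if_neg (by
          rw [show ((⟨(k : ℕ) + 2 ^ K, by omega⟩ : Fin (2 ^ (K + 1))) : ℕ) / 2 ^ K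
              = 1 from by rw [Nat.add_div_right _ hn, Nat.div_eq_of_lt hk],
            Nat.div_eq_of_lt htK]
          omega)]
      simp only [dftM, Matrix.of_apply, hω2, mul_zero, add_zero]
      rw [show ((k : ℕ) % 2 ^ K) = (k : ℕ) from Nat.mod_eq_of_lt hk,
        show (t % 2 ^ K) = t from Nat.mod_eq_of_lt htK]
      rw [ht, ← pow_mul]
      congr 1
      ring
    · -- k in bottom half
      have hB : ∀ i : Fin (2 ^ (K + 1)), Bmat (2 ^ (K + 1)) k i =
          (if i = (⟨(k : ℕ) - 2 ^ K, by omega⟩ : Fin (2 ^ (K + 1))) then 1 else 0)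
            + (if i = k then -ω ^ ((k : ℕ) - 2 ^ K) else 0) := by
        intro i
        simp only [Bmat, Matrix.of_apply, hhalf, ← hωdef]
        rw [if_neg hk]
        rcases eq_or_ne (i : ℕ) ((k : ℕ) - 2 ^ K) with h1 | h1
        · rw [if_pos h1, if_pos (Fin.ext h1), if_neg (fun hc => by
            have := congrArg Fin.val hc; omega), add_zero]
        · rw [if_neg h1, if_neg (fun hc => h1 (congrArg Fin.val hc)), zero_add]
          rcases eq_or_ne (i : ℕ) (k : ℕ) with h2 | h2
          · rw [if_pos h2, if_pos (Fin.ext h2)]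
          · rw [if_neg h2, if_neg (fun hc => h2 (congrArg Fin.val hc))]
      simp only [hB, add_mul, ite_mul, one_mul, zero_mul, neg_mul, Finset.sum_add_distrib,
        Finset.sum_ite_eq', Finset.mem_univ, if_true]
      simp only [blockDiag_apply]
      obtain ⟨a, ha⟩ : ∃ a, (k : ℕ) = 2 ^ K + a ∧ a < 2 ^ K := ⟨(k : ℕ) - 2 ^ K, by omega⟩
      rw [if_pos (by
          rw [show ((k : ℕ) - 2 ^ K) / 2 ^ K = 0 from Nat.div_eq_of_lt (by omega),
            Nat.div_eq_of_lt htK]),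
        if_neg (by
          rw [show (k : ℕ) / 2 ^ K = 1 from by rw [ha.1, Nat.add_div_left _ hn,
              Nat.div_eq_of_lt ha.2],
            Nat.div_eq_of_lt htK]
          omega)]
      simp only [dftM, Matrix.of_apply, hω2, mul_zero, neg_zero, add_zero, ← hωdef]
      rw [show ((k : ℕ) - 2 ^ K) % 2 ^ K = a from by
          rw [show (k : ℕ) - 2 ^ K = a from by omega]; exact Nat.mod_eq_of_lt ha.2,
        show (t % 2 ^ K) = t from Nat.mod_eq_of_lt htK]
      rw [ht, ha.1]
      rw [show (2 ^ K + a) * (2 * t) = 2 * 2 ^ K * t + 2 * (a * t) from by ring,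
        pow_add, pow_mul, hωN, one_pow, one_mul, pow_mul]
  · -- l odd
    have htK : t < 2 ^ K := by omega
    rw [Finset.sum_eq_single (⟨2 ^ K + t, by omega⟩ : Fin (2 ^ (K + 1)))]
    rotate_left
    · intro m _ hm
      have hmv : (m : ℕ) ≠ 2 ^ K + t := fun hc => hm (Fin.ext hc)
      have hmK := m.isLt
      have : Pmat (2 ^ (K + 1)) m l = 0 := by
        simp only [Pmat, Matrix.of_apply, hhalf]
        split_ifs with h1 h2 <;> first | rfl | (exfalso; omega)
      rw [this, mul_zero]
    · intro hmem; exact absurd (Finset.mem_univ _) hmem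
    have hP : Pmat (2 ^ (K + 1)) (⟨2 ^ K + t, by omega⟩ : Fin (2 ^ (K + 1))) l = 1 := by
      simp only [Pmat, Matrix.of_apply, hhalf]
      rw [if_neg (show ¬ (2 ^ K + t < 2 ^ K) from by omega),
        if_pos (show (l : ℕ) = 2 * (2 ^ K + t - 2 ^ K) + 1 from by omega)]
    rw [hP, mul_one, Matrix.mul_apply]
    have hmodm : (2 ^ K + t) % 2 ^ K = t := by
      rw [Nat.add_mod_left, Nat.mod_eq_of_lt htK]
    have hdivm : (2 ^ K + t) / 2 ^ K = 1 := by
      rw [Nat.add_div_left _ hn, Nat.div_eq_of_lt htK]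
    by_cases hk : (k : ℕ) < 2 ^ K
    · -- k in top half
      have hB : ∀ i : Fin (2 ^ (K + 1)), Bmat (2 ^ (K + 1)) k i =
          (if i = k then 1 else 0)
            + (if i = (⟨(k : ℕ) + 2 ^ K, by omega⟩ : Fin (2 ^ (K + 1))) then ω ^ (k : ℕ)
              else 0) := by
        intro i
        simp only [Bmat, Matrix.of_apply, hhalf, ← hωdef]
        rw [if_pos hk]
        rcases eq_or_ne (i : ℕ) (k : ℕ) with h1 | h1
        · rw [if_pos h1, if_pos (Fin.ext h1), if_neg (fun hc => by
            have := congrArg Fin.val hc; simp at this; omega), add_zero]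
        · rw [if_neg h1, if_neg (fun hc => h1 (congrArg Fin.val hc)), zero_add]
          rcases eq_or_ne (i : ℕ) ((k : ℕ) + 2 ^ K) with h2 | h2
          · rw [if_pos h2, if_pos (Fin.ext h2)]
          · rw [if_neg h2, if_neg (fun hc => h2 (congrArg Fin.val hc))]
      simp only [hB, add_mul, ite_mul, one_mul, zero_mul, Finset.sum_add_distrib,
        Finset.sum_ite_eq', Finset.mem_univ, if_true]
      simp only [blockDiag_apply]
      rw [if_neg (by rw [Nat.div_eq_of_lt hk, hdivm]; omega),
        if_pos (by rw [show ((k : ℕ) + 2 ^ K) / 2 ^ K = 1 from by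
            rw [Nat.add_div_right _ hn, Nat.div_eq_of_lt hk], hdivm])]
      simp only [dftM, Matrix.of_apply, hω2, mul_zero, zero_mul, neg_zero, zero_add, ← hωdef]
      rw [show ((k : ℕ) + 2 ^ K) % 2 ^ K = (k : ℕ) from by
          rw [Nat.add_mod_right, Nat.mod_eq_of_lt hk],
        hmodm]
      rw [ht]
      rw [show (k : ℕ) * (2 * t + 1) = (k : ℕ) + 2 * ((k : ℕ) * t) from by ring,
        pow_add, pow_mul]
    · -- k in bottom half
      have hB : ∀ i : Fin (2 ^ (K + 1)), Bmat (2 ^ (K + 1)) k i =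
          (if i = (⟨(k : ℕ) - 2 ^ K, by omega⟩ : Fin (2 ^ (K + 1))) then 1 else 0)
            + (if i = k then -ω ^ ((k : ℕ) - 2 ^ K) else 0) := by
        intro i
        simp only [Bmat, Matrix.of_apply, hhalf, ← hωdef]
        rw [if_neg hk]
        rcases eq_or_ne (i : ℕ) ((k : ℕ) - 2 ^ K) with h1 | h1
        · rw [if_pos h1, if_pos (Fin.ext h1), if_neg (fun hc => by
            have := congrArg Fin.val hc; omega), add_zero]
        · rw [if_neg h1, if_neg (fun hc => h1 (congrArg Fin.val hc)), zero_add]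
          rcases eq_or_ne (i : ℕ) (k : ℕ) with h2 | h2
          · rw [if_pos h2, if_pos (Fin.ext h2)]
          · rw [if_neg h2, if_neg (fun hc => h2 (congrArg Fin.val hc))]
      simp only [hB, add_mul, ite_mul, one_mul, zero_mul, neg_mul, Finset.sum_add_distrib,
        Finset.sum_ite_eq', Finset.mem_univ, if_true]
      simp only [blockDiag_apply]
      obtain ⟨a, ha⟩ : ∃ a, (k : ℕ) = 2 ^ K + a ∧ a < 2 ^ K := ⟨(k : ℕ) - 2 ^ K, by omega⟩
      rw [if_neg (by
          rw [show ((k : ℕ) - 2 ^ K) / 2 ^ K = 0 from Nat.div_eq_of_lt (by omega), hdivm]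
          omega),
        if_pos (by
          rw [show (k : ℕ) / 2 ^ K = 1 from by rw [ha.1, Nat.add_div_left _ hn,
            Nat.div_eq_of_lt ha.2], hdivm])]
      simp only [dftM, Matrix.of_apply, hω2, mul_zero, zero_mul, neg_zero, zero_add, ← hωdef]
      rw [show (k : ℕ) % 2 ^ K = a from by
          rw [ha.1, Nat.add_mod_left]; exact Nat.mod_eq_of_lt ha.2, hmodm]
      rw [ht, ha.1,
        show (2 ^ K + a) * (2 * t + 1) = 2 ^ K + (2 * 2 ^ K * t + (a + 2 * (a * t)))
          from by ring,
        pow_add, pow_add, pow_add, pow_mul, pow_mul, hωn,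
        show (((ω ^ 2) ^ 2 ^ K : ℂ)) = 1 from by rw [← pow_mul]; exact hωN, one_pow,
        show (2 ^ K + a - 2 ^ K) = a from by omega]
      ring

lemma dftM_one : dftM 1 = 1 := by
  ext i j
  have hij : i = j := Subsingleton.elim i j
  subst hij
  have h0 : (i : ℕ) = 0 := by have := i.isLt; omega
  rw [Matrix.one_apply_eq]
  simp [dftM, h0]


/-- For `L ≥ 1` and `N = 2^L`, the DFT matrix admits the butterfly
factorization `F_N = F^(L) F^(L−1) ⋯ F^(1) R_N`. -/
theorem dft_butterfly_factorization (L : ℕ) (hL : 1 ≤ L) :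
    dftM (2 ^ L) = ((List.range' 1 L).reverse.map (Fbut L)).prod * Rmat L := by
  clear hL
  induction L with
  | zero => simp [Rmat, dftM_one]
  | succ K ih =>
    have hrange : List.range' 1 (K + 1) = List.range' 1 K ++ [K + 1] := by
      rw [List.range'_concat]; norm_num; omega
    have hmem : ∀ ℓ ∈ List.range' 1 K, 1 ≤ ℓ ∧ ℓ ≤ K := fun ℓ hℓ => by
      have := List.mem_range'_1.mp hℓ; omega
    have hFb : ((List.range' 1 (K + 1)).reverse.map (Fbut (K + 1))).prod
        = Bmat (2 ^ (K + 1)) * blockDiag (K + 1) K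
            (((List.range' 1 K).reverse.map (Fbut K)).prod) := by
      rw [hrange, List.reverse_append]
      simp only [List.reverse_singleton, List.singleton_append, List.map_cons, List.prod_cons]
      congr 1
      · exact blockDiag_self _ _
      · have hmm : (List.range' 1 K).reverse.map (Fbut (K + 1))
            = ((List.range' 1 K).reverse.map (Fbut K)).map (blockDiag (K + 1) K) := by
          rw [List.map_map]
          exact List.map_congr_left (fun ℓ hℓ =>
            (blockDiag_blockDiag (K + 1) K ℓ (hmem ℓ (List.mem_reverse.mp hℓ)).2
              (by omega) _).symm)
        rw [hmm, blockDiag_prod _ _ (by omega)]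
    have hQb : Rmat (K + 1) = blockDiag (K + 1) K (Rmat K) * Pmat (2 ^ (K + 1)) := by
      unfold Rmat
      rw [hrange, List.map_append, List.prod_append]
      simp only [List.map_cons, List.map_nil, List.prod_cons, List.prod_nil, mul_one]
      congr 1
      · have hmm : (List.range' 1 K).map (Qmat (K + 1))
            = ((List.range' 1 K).map (Qmat K)).map (blockDiag (K + 1) K) := by
          rw [List.map_map]
          exact List.map_congr_left (fun ℓ hℓ =>
            (blockDiag_blockDiag (K + 1) K ℓ (hmem ℓ hℓ).2 (by omega) _).symm)
        rw [hmm, blockDiag_prod _ _ (by omega)]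
      · exact blockDiag_self _ _
    rw [hFb, hQb, dft_rec K, ih, blockDiag_mul _ _ (by omega)]
    simp only [mul_assoc]
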